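/- (Inequality (19) of the paper: C + Z ≥ 1 for binary-input memoryless symmetric channels.) Let Y be a finite set and let p_0, p_1 be probability mass functions on Y for which there exists an involution π: Y → Y (π ∘ π = id) with p_1(y) = p_0(π(y)) for all y ∈ Y. Let X be uniform on {0,1} and let Y be a random variable with conditional law P(Y = y | X = b) = p_b(y). Then I(X; Y) + Σ_{y∈Y} √(p_0(y) p_1(y)) ≥ 1, where I is mutual information in bits (logarithm base 2) and the sum is the Bhattacharyya parameter Z of the channel. -/

import Mathlib

open scoped Classical

noncomputable section

/-- `p` is a probability mass function on the finite sample space `Ω`. -/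
def IsPMF {Ω : Type} [Fintype Ω] (p : Ω → ℝ) : Prop :=
  (∀ ω, 0 ≤ p ω) ∧ ∑ ω, p ω = 1

/-- `P(X = x)`: the probability of the event `{X = x}` under the pmf `p`. -/
def prob {Ω : Type} [Fintype Ω] (p : Ω → ℝ) {α : Type} (X : Ω → α) (x : α) : ℝ :=
  ∑ ω, if X ω = x then p ω else 0

/-- Shannon entropy of `X` in bits (logarithm base 2). -/
def entropy {Ω : Type} [Fintype Ω] (p : Ω → ℝ) {α : Type} [Fintype α] (X : Ω → α) : ℝ :=
  -∑ x, prob p X x * Real.logb 2 (prob p X x)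

/-- Mutual information `I(X;Y) = H(X) + H(Y) - H((X,Y))` in bits. -/
def mutInfo {Ω : Type} [Fintype Ω] (p : Ω → ℝ) {α β : Type} [Fintype α] [Fintype β]
    (X : Ω → α) (Y : Ω → β) : ℝ :=
  entropy p X + entropy p Y - entropy p fun ω => (X ω, Y ω)

/-- Conditional mutual information
`I(X;Y∣W) = H((X,W)) + H((Y,W)) - H((X,Y,W)) - H(W)` in bits. -/
def condMutInfo {Ω : Type} [Fintype Ω] (p : Ω → ℝ) {α β γ : Type}
    [Fintype α] [Fintype β] [Fintype γ] (X : Ω → α) (Y : Ω → β) (W : Ω → γ) : ℝ :=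
  entropy p (fun ω => (X ω, W ω)) + entropy p (fun ω => (Y ω, W ω))
    - entropy p (fun ω => (X ω, Y ω, W ω)) - entropy p W

/-!
For each output `y`, the two-point inequality
`negMulLog a + negMulLog b ≤ negMulLog (a + b) + 2 log 2 · √(a b)` (equivalently
`h(x) ≤ 2 √(x (1 - x))` for the binary entropy in bits), applied to the joint masses
`a = P(X = 0, Y = y)` and `b = P(X = 1, Y = y)`, bounds the contribution of `y` to `H(X ∣ Y)` by
`√(p₀(y) p₁(y))`. Summing over `y` gives `H(X ∣ Y) ≤ Z`, hence `I(X;Y) = H(X) - H(X ∣ Y) ≥ 1 - Z`.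

By homogeneity the two-point inequality reduces to `a = 1`, `b = s²` with `0 ≤ s ≤ 1`, i.e. to
`slack s ≥ 0`. Here `slack' s = 2 (log 2 - s log (1 + s⁻²))`, and `s ↦ s log (1 + s⁻²)` is concave
on `(0, 1]`. Its values `log 10 / 3` and `log 2` at `1/3` and `1` show that it is at least `log 2`
on `[1/3, 1]`, so `slack` decreases there to `slack 1 = 0`; its derivative is positive on
`(0, 1/3]`, so `slack` is concave on `[0, 1/3]`, where `slack 0 = 0`.
-/

section TwoPointInequality

open Real Set

/-- With `a = 1` and `b = s ^ 2`, this is the slack in `negMulLog_add_negMulLog_le`. -/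
def slack (s : ℝ) : ℝ := 2 * log 2 * s + negMulLog (1 + s ^ 2) - negMulLog (s ^ 2)

def slackRate (s : ℝ) : ℝ := s * log (1 + (s ^ 2)⁻¹)

def slackRateDeriv (s : ℝ) : ℝ := log (1 + (s ^ 2)⁻¹) - 2 / (1 + s ^ 2)

lemma hasDerivAt_sq (s : ℝ) : HasDerivAt (fun s : ℝ => s ^ 2) (2 * s) s := by
  simpa using hasDerivAt_pow 2 s

lemma hasDerivAt_one_add_sq (s : ℝ) : HasDerivAt (fun s : ℝ => 1 + s ^ 2) (2 * s) s :=
  (hasDerivAt_sq s).const_add 1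

lemma hasDerivAt_log_one_add_inv_sq {s : ℝ} (hs : s ≠ 0) :
    HasDerivAt (fun s : ℝ => log (1 + (s ^ 2)⁻¹)) (-2 / (s * (1 + s ^ 2))) s := by
  have h := (((hasDerivAt_sq s).fun_inv (pow_ne_zero 2 hs)).const_add 1).log
    (by positivity : 1 + (s ^ 2)⁻¹ ≠ 0)
  refine h.congr_deriv ?_
  field_simp
  ring

lemma hasDerivAt_slack {s : ℝ} (hs : s ≠ 0) :
    HasDerivAt slack (2 * (log 2 - slackRate s)) s := by
  have h1 := (hasDerivAt_negMulLog (by positivity : 1 + s ^ 2 ≠ 0)).comp s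
    (hasDerivAt_one_add_sq s)
  have h2 := (hasDerivAt_negMulLog (x := s ^ 2) (by positivity)).comp s (hasDerivAt_sq s)
  refine ((((hasDerivAt_id s).const_mul (2 * log 2)).add h1).sub h2).congr_deriv ?_
  have : log (1 + (s ^ 2)⁻¹) = log (1 + s ^ 2) - log (s ^ 2) := by
    rw [← log_div (by positivity) (by positivity)]
    congr 1
    field_simp
    ring
  rw [slackRate, this]
  ring

lemma hasDerivAt_slackRate {s : ℝ} (hs : s ≠ 0) :
    HasDerivAt slackRate (slackRateDeriv s) s := by
  refine ((hasDerivAt_id s).mul (hasDerivAt_log_one_add_inv_sq hs)).congr_deriv ?_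
  rw [slackRateDeriv, id]
  field_simp
  ring

lemma hasDerivAt_slackRateDeriv {s : ℝ} (hs : s ≠ 0) :
    HasDerivAt slackRateDeriv (2 * (s ^ 2 - 1) / (s * (1 + s ^ 2) ^ 2)) s := by
  have h := (hasDerivAt_const s (2 : ℝ)).div (hasDerivAt_one_add_sq s) (by positivity)
  refine ((hasDerivAt_log_one_add_inv_sq hs).sub h).congr_deriv ?_
  field_simp
  ring

lemma continuous_slack : Continuous slack := by
  unfold slack
  fun_prop

lemma slack_zero : slack 0 = 0 := by
  simp [slack]

lemma slack_one : slack 1 = 0 := by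
  norm_num [slack, negMulLog]

lemma slackRateDeriv_antitoneOn : AntitoneOn slackRateDeriv (Ioc 0 1) := by
  refine antitoneOn_of_hasDerivWithinAt_nonpos (convex_Ioc 0 1)
    (fun x hx => (hasDerivAt_slackRateDeriv hx.1.ne').continuousAt.continuousWithinAt)
    (fun x hx => (hasDerivAt_slackRateDeriv (interior_subset hx).1.ne').hasDerivWithinAt)
    fun x hx => ?_
  rw [interior_Ioc] at hx
  exact div_nonpos_of_nonpos_of_nonneg (by nlinarith [hx.1, hx.2]) (by have := hx.1; positivity)

lemma slackRate_concaveOn : ConcaveOn ℝ (Ioc 0 1) slackRate := by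
  refine concaveOn_of_hasDerivWithinAt2_nonpos (convex_Ioc 0 1)
    (fun x hx => (hasDerivAt_slackRate hx.1.ne').continuousAt.continuousWithinAt)
    (fun x hx => (hasDerivAt_slackRate (interior_subset hx).1.ne').hasDerivWithinAt)
    (fun x hx => (hasDerivAt_slackRateDeriv (interior_subset hx).1.ne').hasDerivWithinAt)
    fun x hx => ?_
  rw [interior_Ioc] at hx
  exact div_nonpos_of_nonpos_of_nonneg (by nlinarith [hx.1, hx.2]) (by have := hx.1; positivity)

lemma three_mul_log_two_le_log_ten : 3 * log 2 ≤ log 10 := by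
  rw [← log_rpow two_pos]
  exact log_le_log (by norm_num) (by norm_num)

lemma log_two_le_slackRate {s : ℝ} (hs : s ∈ Icc (1 / 3) 1) : log 2 ≤ slackRate s := by
  have h := slackRate_concaveOn.min_le_of_mem_Icc (x := 1 / 3) (y := 1)
    (by norm_num) (by norm_num) hs
  have h13 : slackRate (1 / 3) = log 10 / 3 := by norm_num [slackRate]; ring
  have h1 : slackRate 1 = log 2 := by norm_num [slackRate]
  rw [h13, h1] at h
  exact (le_min (by linarith [three_mul_log_two_le_log_ten]) le_rfl).trans h

lemma slackRateDeriv_nonneg {s : ℝ} (hs : s ∈ Ioc 0 (1 / 3)) : 0 ≤ slackRateDeriv s := by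
  have h := slackRateDeriv_antitoneOn ⟨hs.1, hs.2.trans (by norm_num)⟩
    (by norm_num : (1 / 3 : ℝ) ∈ Ioc 0 1) hs.2
  have h13 : slackRateDeriv (1 / 3) = log 10 - 9 / 5 := by norm_num [slackRateDeriv]
  linarith [three_mul_log_two_le_log_ten, log_two_gt_d9]

lemma slack_antitoneOn : AntitoneOn slack (Icc (1 / 3) 1) := by
  refine antitoneOn_of_hasDerivWithinAt_nonpos (f' := fun s => 2 * (log 2 - slackRate s))
    (convex_Icc _ _) continuous_slack.continuousOn
    (fun x hx => ?_) fun x hx => ?_ <;> rw [interior_Icc] at hx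
  · exact (hasDerivAt_slack (by linarith [hx.1])).hasDerivWithinAt
  · linarith [log_two_le_slackRate (Ioo_subset_Icc_self hx)]

lemma slack_concaveOn : ConcaveOn ℝ (Icc 0 (1 / 3)) slack := by
  refine concaveOn_of_hasDerivWithinAt2_nonpos (f' := fun s => 2 * (log 2 - slackRate s))
    (f'' := fun s => 2 * -slackRateDeriv s)
    (convex_Icc _ _) continuous_slack.continuousOn (fun x hx => ?_) (fun x hx => ?_)
    fun x hx => ?_ <;> rw [interior_Icc] at hx
  · exact (hasDerivAt_slack hx.1.ne').hasDerivWithinAt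
  · exact (((hasDerivAt_slackRate hx.1.ne').const_sub _).const_mul 2).hasDerivWithinAt
  · linarith [slackRateDeriv_nonneg (Ioo_subset_Ioc_self hx)]

lemma slack_nonneg {s : ℝ} (hs : s ∈ Icc 0 1) : 0 ≤ slack s := by
  have hright : ∀ t ∈ Icc (1 / 3 : ℝ) 1, 0 ≤ slack t := fun t ht =>
    slack_one ▸ slack_antitoneOn ht (by norm_num) ht.2
  rcases le_total s (1 / 3) with h | h
  · have := slack_concaveOn.min_le_of_mem_Icc (x := 0) (y := 1 / 3)
      (by norm_num) (by norm_num) ⟨hs.1, h⟩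
    rw [slack_zero] at this
    exact (le_min le_rfl (hright _ (by norm_num))).trans this
  · exact hright s ⟨h, hs.2⟩

lemma negMulLog_add_negMulLog_le {a b : ℝ} (ha : 0 ≤ a) (hb : 0 ≤ b) :
    negMulLog a + negMulLog b ≤ negMulLog (a + b) + 2 * log 2 * √(a * b) := by
  wlog hba : b ≤ a generalizing a b
  · simpa only [add_comm, mul_comm] using this hb ha (le_of_not_ge hba)
  rcases ha.eq_or_lt with rfl | ha
  · simp [le_antisymm hba hb]
  obtain ⟨s, hs, rfl⟩ : ∃ s ∈ Icc (0 : ℝ) 1, b = a * s ^ 2 :=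
    ⟨√(b / a), ⟨sqrt_nonneg _, sqrt_le_one.mpr ((div_le_one ha).mpr hba)⟩, by
      rw [sq_sqrt (by positivity)]; field_simp⟩
  have hsqrt : √(a * (a * s ^ 2)) = a * s := by
    rw [← sqrt_sq (mul_nonneg ha.le hs.1)]
    ring_nf
  have hslack := mul_nonneg ha.le (slack_nonneg hs)
  rw [slack] at hslack
  rw [show a + a * s ^ 2 = a * (1 + s ^ 2) by ring, negMulLog_mul, negMulLog_mul, hsqrt]
  linarith

end TwoPointInequality

section Entropy

open Real

variable {Ω α β : Type} [Fintype Ω] (p : Ω → ℝ)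

lemma prob_nonneg (hp : ∀ ω, 0 ≤ p ω) (X : Ω → α) (x : α) : 0 ≤ prob p X x :=
  Finset.sum_nonneg fun ω _ => by split_ifs <;> simp [hp ω]

lemma prob_fst_eq_sum [Fintype β] (X : Ω → α) (Y : Ω → β) (x : α) :
    prob p X x = ∑ y, prob p (fun ω => (X ω, Y ω)) (x, y) := by
  unfold prob
  rw [Finset.sum_comm]
  refine Finset.sum_congr rfl fun ω _ => ?_
  by_cases h : X ω = x <;> simp [h]

lemma prob_snd_eq_sum [Fintype α] (X : Ω → α) (Y : Ω → β) (y : β) :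
    prob p Y y = ∑ x, prob p (fun ω => (X ω, Y ω)) (x, y) := by
  unfold prob
  rw [Finset.sum_comm]
  refine Finset.sum_congr rfl fun ω _ => ?_
  by_cases h : Y ω = y <;> simp [h]

lemma entropy_eq_sum_negMulLog_div [Fintype α] (X : Ω → α) :
    entropy p X = (∑ x, negMulLog (prob p X x)) / log 2 := by
  simp only [entropy, logb, negMulLog, neg_div, Finset.sum_div, neg_mul, mul_div_assoc,
    Finset.sum_neg_distrib]

lemma entropy_pair_le_entropy_add_sum_sqrt [Fintype β] (hp : ∀ ω, 0 ≤ p ω) (X : Ω → Bool)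
    (Y : Ω → β) :
    entropy p (fun ω => (X ω, Y ω)) ≤ entropy p Y + 2 * ∑ y,
      √(prob p (fun ω => (X ω, Y ω)) (false, y) * prob p (fun ω => (X ω, Y ω)) (true, y)) := by
  have hlog2 : 0 < log 2 := log_pos one_lt_two
  rw [entropy_eq_sum_negMulLog_div, entropy_eq_sum_negMulLog_div, Fintype.sum_prod_type,
    Fintype.sum_bool, ← Finset.sum_add_distrib, div_le_iff₀ hlog2, add_mul,
    div_mul_cancel₀ _ hlog2.ne', Finset.mul_sum, mul_comm, Finset.mul_sum,
    ← Finset.sum_add_distrib]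
  refine Finset.sum_le_sum fun y _ => ?_
  have hY : prob p Y y = prob p (fun ω => (X ω, Y ω)) (false, y)
      + prob p (fun ω => (X ω, Y ω)) (true, y) := by
    rw [prob_snd_eq_sum p X Y, Fintype.sum_bool, add_comm]
  have hP := fun b => prob_nonneg p hp (fun ω => (X ω, Y ω)) (b, y)
  rw [hY]
  linarith [negMulLog_add_negMulLog_le (hP false) (hP true)]

end Entropy

theorem stmt11_general {Ω : Type} [Fintype Ω] (p : Ω → ℝ) (hp : IsPMF p)
    {γ : Type} [Fintype γ] (p0 p1 : γ → ℝ)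
    (h0 : (∀ y, 0 ≤ p0 y) ∧ ∑ y, p0 y = 1)
    (h1 : (∀ y, 0 ≤ p1 y) ∧ ∑ y, p1 y = 1)
    (X : Ω → Bool) (Y : Ω → γ)
    (hjoint : ∀ b y, prob p (fun ω => (X ω, Y ω)) (b, y)
      = (1 / 2 : ℝ) * (if b then p1 y else p0 y)) :
    1 ≤ mutInfo p X Y + ∑ y, Real.sqrt (p0 y * p1 y) := by
  have hX : ∀ b, prob p X b = 1 / 2 := fun b => by
    cases b <;> simp [prob_fst_eq_sum p X Y, hjoint, ← Finset.mul_sum, h0.2, h1.2]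
  have hHX : entropy p X = 1 := by
    rw [entropy_eq_sum_negMulLog_div, Fintype.sum_bool, hX, hX, Real.negMulLog, one_div,
      Real.log_inv]
    field_simp
    ring
  have hZ : ∀ y, 2 * √(prob p (fun ω => (X ω, Y ω)) (false, y)
      * prob p (fun ω => (X ω, Y ω)) (true, y)) = √(p0 y * p1 y) := fun y => by
    simp only [hjoint, Bool.false_eq_true, if_false, if_true]
    rw [show 1 / 2 * p0 y * (1 / 2 * p1 y) = (1 / 2) ^ 2 * (p0 y * p1 y) by ring,
      Real.sqrt_mul (by norm_num), Real.sqrt_sq (by norm_num)]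
    ring
  have hcond := entropy_pair_le_entropy_add_sum_sqrt p hp.1 X Y
  rw [Finset.mul_sum] at hcond
  simp only [hZ] at hcond
  rw [mutInfo]
  linarith

/-- **Inequality (19)**: `C + Z ≥ 1` for BMS channels. If `p0, p1` are output pmfs related
by an involution `π` (`p1 y = p0 (π y)`), `X` is uniform on `{0,1}` and `Y` has conditional
law `P(Y = y ∣ X = b) = p_b(y)`, then `I(X;Y) + ∑_y √(p0 y · p1 y) ≥ 1`. -/
theorem stmt11 {Ω : Type} [Fintype Ω] (p : Ω → ℝ) (hp : IsPMF p)
    {γ : Type} [Fintype γ] (p0 p1 : γ → ℝ)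
    (h0 : (∀ y, 0 ≤ p0 y) ∧ ∑ y, p0 y = 1)
    (h1 : (∀ y, 0 ≤ p1 y) ∧ ∑ y, p1 y = 1)
    (π : γ → γ) (hinv : ∀ y, π (π y) = y) (hsym : ∀ y, p1 y = p0 (π y))
    (X : Ω → Bool) (Y : Ω → γ)
    (hjoint : ∀ b y, prob p (fun ω => (X ω, Y ω)) (b, y)
      = (1 / 2 : ℝ) * (if b then p1 y else p0 y)) :
    1 ≤ mutInfo p X Y + ∑ y, Real.sqrt (p0 y * p1 y) :=
  stmt11_general p hp p0 p1 h0 h1 X Y hjoint
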